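/- Let n ≥ 2, let P = (p_{i1 i2 i3 i4}) be a 4th order, n-dimensional stochastic tensor (the transition tensor of a third order Markov chain on S = {1,…,n}), and let Q be its reduced transition matrix. Then for every integer k ≥ 3 and all i1, i2, i3, i4 ∈ S, the k-step transition probability satisfies p^{(k)}_{i1 i2 i3 i4} = Σ_{j2 ∈ S} Σ_{j1 ∈ S} (Q^k)_{(i1,j1,j2),(i2,i3,i4)}. -/

import Mathlib

open Finset

/-- A 4th order, `n`-dimensional tensor: entry `p_{i₁ i₂ i₃ i₄}` is `P i₁ i₂ i₃ i₄`. -/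
abbrev Tensor4 (n : ℕ) := Fin n → Fin n → Fin n → Fin n → ℝ

/-- `P` is a stochastic tensor. -/
def IsStochastic4 {n : ℕ} (P : Tensor4 n) : Prop :=
  (∀ i₁ i₂ i₃ i₄, 0 ≤ P i₁ i₂ i₃ i₄ ∧ P i₁ i₂ i₃ i₄ ≤ 1) ∧
  ∀ i₂ i₃ i₄, ∑ i₁ : Fin n, P i₁ i₂ i₃ i₄ = 1

/-- The product `A ⊠ B`. -/
def tmul4 {n : ℕ} (A B : Tensor4 n) : Tensor4 n :=
  fun i₁ i₂ i₃ i₄ => ∑ j : Fin n, A i₁ j i₂ i₃ * B j i₂ i₃ i₄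

/-- Tensor powers: `tpow4 P k` is `P^k`, with entries the `k`-step transition
probabilities `p^{(k)}_{i₁ i₂ i₃ i₄}`; `P^0` is the identity tensor. -/
def tpow4 {n : ℕ} (P : Tensor4 n) : ℕ → Tensor4 n
  | 0 => fun i₁ i₂ _ _ => if i₁ = i₂ then 1 else 0
  | k + 1 => tmul4 (tpow4 P k) P

/-- The reduced transition matrix `Q` of a third order chain: rows and columns are
indexed by triples, `Q (i₁,i₂,i₃) (j₁,j₂,j₃) = p_{i₁ i₂ i₃ j₃}` if `j₁ = i₂` and
`j₂ = i₃`, and `0` otherwise. -/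
def reduced4 {n : ℕ} (P : Tensor4 n) :
    Matrix (Fin n × Fin n × Fin n) (Fin n × Fin n × Fin n) ℝ :=
  fun r c => if c.1 = r.2.1 ∧ c.2.1 = r.2.2 then P r.1 r.2.1 r.2.2 c.2.2 else 0

/- Right multiplication by `Q` only reaches the columns `(a, i₂, i₃)` of `Q^k`, so the entries of
`Q^k` summed over the last two row indices obey the same recursion as the tensor powers `P^k`,
from the same initial value. -/

theorem reduced4_pow_succ_apply {n : ℕ} (P : Tensor4 n) (k : ℕ) (r : Fin n × Fin n × Fin n)
    (i₂ i₃ i₄ : Fin n) :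
    (reduced4 P ^ (k + 1)) r (i₂, i₃, i₄) =
      ∑ a : Fin n, (reduced4 P ^ k) r (a, i₂, i₃) * P a i₂ i₃ i₄ := by
  simp only [pow_succ, Matrix.mul_apply, Fintype.sum_prod_type, reduced4, mul_ite, mul_zero,
    ite_and, sum_ite_irrel, sum_const_zero, sum_ite_eq, mem_univ, if_true]

theorem k_step_via_reduced {n : ℕ} (P : Tensor4 n) (k : ℕ) (i₁ i₂ i₃ i₄ : Fin n) :
    tpow4 P k i₁ i₂ i₃ i₄ =
      ∑ j₂ : Fin n, ∑ j₁ : Fin n, (reduced4 P ^ k) (i₁, j₁, j₂) (i₂, i₃, i₄) := by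
  induction k generalizing i₂ i₃ i₄ with
  | zero => simp [tpow4, Matrix.one_apply, Prod.ext_iff, ite_and]
  | succ k ih =>
    calc tpow4 P (k + 1) i₁ i₂ i₃ i₄
        = ∑ a : Fin n, tpow4 P k i₁ a i₂ i₃ * P a i₂ i₃ i₄ := rfl
      _ = ∑ a : Fin n, ∑ j₂ : Fin n, ∑ j₁ : Fin n,
            (reduced4 P ^ k) (i₁, j₁, j₂) (a, i₂, i₃) * P a i₂ i₃ i₄ := by
        simp only [ih, sum_mul]
      _ = ∑ j₂ : Fin n, ∑ j₁ : Fin n, (reduced4 P ^ (k + 1)) (i₁, j₁, j₂) (i₂, i₃, i₄) := by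
        simp only [reduced4_pow_succ_apply]
        rw [sum_comm]
        exact sum_congr rfl fun _ _ => sum_comm
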